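/- arXiv:2207.08368 — 3 statements merged into one kernel-verified Lean document; each statement's English description precedes it below -/
import Mathlib

section
/- Let α be a real number and let μ be a positive Borel measure on [0,1) with moments μ_n = ∫_{[0,1)} t^n dμ(t). Suppose there exist ε > 0 and C > 0 such that μ_n ≤ C·n^{-(α/2+ε)} for all n ≥ 1. Then there exists a constant C' > 0 such that for every complex sequence (a_k)_{k≥0} with Σ_{k=0}^∞ (k+1)^{1-α}|a_k|² < ∞ and every n ∈ ℕ, one has Σ_{k=0}^∞ μ_{n+k}|a_k| ≤ C'·(Σ_{k=0}^∞ (k+1)^{1-α}|a_k|²)^{1/2}. In particular, for each n the series Σ_{k=0}^∞ μ_{n+k} a_k converges absolutely, and hence the power series Σ_{n=0}^∞ (Σ_{k=0}^∞ μ_{n+k} a_k)(n+1) z^n defines an analytic function on the open unit disk. -/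
/-!
Write `w k = (k+1)^(1-α)`. By Cauchy–Schwarz with weights `w`,
`∑ μ_{n+k} |a_k| ≤ (∑ μ_{n+k}² / w k)^(1/2) (∑ w k |a_k|²)^(1/2)`, and since the moments decrease,
the first factor is at most `(∑ μ_k² / w k)^(1/2)`, uniformly in `n`. This series converges because
its terms are `O(k^(-1-2ε))` by the moment hypothesis. The coefficients of the power series are
thus `O(n+1)`, so its radius of convergence is at least `1`.
-/

open MeasureTheory

/-- The `n`-th moment of a positive Borel measure on `[0,1)`. -/
noncomputable def moment (μ : Measure ℝ) (n : ℕ) : ℝ :=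
  ∫ t in Set.Ico (0 : ℝ) 1, t ^ n ∂μ

lemma moment_nonneg (μ : Measure ℝ) (n : ℕ) : 0 ≤ moment μ n :=
  setIntegral_nonneg measurableSet_Ico fun _ ht => pow_nonneg ht.1 n

lemma integrableOn_pow_Ico (μ : Measure ℝ) [IsFiniteMeasure μ] (n : ℕ) :
    IntegrableOn (fun t : ℝ => t ^ n) (Set.Ico 0 1) μ := by
  refine Measure.integrableOn_of_bounded (M := 1) (measure_ne_top μ _)
    (continuous_pow n).aestronglyMeasurable ?_
  refine (ae_restrict_iff' measurableSet_Ico).2 (Filter.Eventually.of_forall fun t ht => ?_)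
  rw [Real.norm_eq_abs, abs_pow]
  exact pow_le_one₀ (abs_nonneg t) (abs_le.2 ⟨by linarith [ht.1], ht.2.le⟩)

lemma moment_antitone (μ : Measure ℝ) [IsFiniteMeasure μ] : Antitone (moment μ) :=
  fun _ _ h => setIntegral_mono_on (integrableOn_pow_Ico μ _) (integrableOn_pow_Ico μ _)
    measurableSet_Ico fun _ ht => pow_le_pow_of_le_one ht.1 ht.2.le h

lemma rpow_add_one_le (p : ℝ) {x : ℝ} (hx : 1 ≤ x) : (x + 1) ^ p ≤ 2 ^ |p| * x ^ p := by
  have hx0 : 0 < x := by linarith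
  rcases le_or_gt 0 p with hp | hp
  · calc (x + 1) ^ p ≤ (2 * x) ^ p := Real.rpow_le_rpow (by linarith) (by linarith) hp
      _ = 2 ^ |p| * x ^ p := by rw [Real.mul_rpow zero_le_two hx0.le, abs_of_nonneg hp]
  · calc (x + 1) ^ p ≤ 1 * x ^ p := by
          rw [one_mul]; exact Real.rpow_le_rpow_of_nonpos hx0 (by linarith) hp.le
      _ ≤ 2 ^ |p| * x ^ p := by
          gcongr; exact Real.one_le_rpow one_le_two (abs_nonneg p)

lemma summable_sq_div_rpow_of_le_rpow {m : ℕ → ℝ} {α ε C : ℝ} (hε : 0 < ε)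
    (hm0 : ∀ n, 0 ≤ m n) (hm : ∀ n : ℕ, 1 ≤ n → m n ≤ C * (n : ℝ) ^ (-(α / 2 + ε))) :
    Summable fun k : ℕ => m k ^ 2 / ((k : ℝ) + 1) ^ (1 - α) := by
  rw [← summable_nat_add_iff 1]
  have hmaj : Summable fun k : ℕ => C ^ 2 * 2 ^ |α - 1| * ((k + 1 : ℕ) : ℝ) ^ (-1 - 2 * ε) :=
    ((summable_nat_add_iff 1).2 (Real.summable_nat_rpow.2 (by linarith))).mul_left _
  refine hmaj.of_nonneg_of_le (fun k => div_nonneg (sq_nonneg _) (by positivity)) fun k => ?_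
  set x : ℝ := ((k + 1 : ℕ) : ℝ)
  have hx : 1 ≤ x := by simp [x]
  have hx0 : 0 < x := by linarith
  calc m (k + 1) ^ 2 / (x + 1) ^ (1 - α) = m (k + 1) ^ 2 * (x + 1) ^ (α - 1) := by
        rw [div_eq_mul_inv, ← Real.rpow_neg (by linarith), neg_sub]
    _ ≤ (C * x ^ (-(α / 2 + ε))) ^ 2 * (2 ^ |α - 1| * x ^ (α - 1)) := by
        gcongr
        · exact hm0 _
        · exact hm _ (Nat.le_add_left 1 k)
        · exact rpow_add_one_le _ hx
    _ = C ^ 2 * 2 ^ |α - 1| * (x ^ (-(α / 2 + ε)) * x ^ (-(α / 2 + ε)) * x ^ (α - 1)) := by ring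
    _ = C ^ 2 * 2 ^ |α - 1| * x ^ (-1 - 2 * ε) := by
        rw [← Real.rpow_add hx0, ← Real.rpow_add hx0]; ring_nf

lemma summable_and_tsum_mul_le_weighted {u v w : ℕ → ℝ} (hu : ∀ k, 0 ≤ u k)
    (hv : ∀ k, 0 ≤ v k) (hw : ∀ k, 0 < w k) (hu2 : Summable fun k => u k ^ 2 / w k)
    (hv2 : Summable fun k => w k * v k ^ 2) :
    (Summable fun k => u k * v k) ∧
      ∑' k, u k * v k ≤ (∑' k, u k ^ 2 / w k) ^ (1 / 2 : ℝ) * (∑' k, w k * v k ^ 2) ^ (1 / 2 : ℝ) := by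
  have hprod : ∀ k, u k / √(w k) * (√(w k) * v k) = u k * v k := fun k => by
    field_simp [(Real.sqrt_pos.2 (hw k)).ne']
  have hf : ∀ k, (u k / √(w k)) ^ (2 : ℝ) = u k ^ 2 / w k := fun k => by
    rw [Real.rpow_two, div_pow, Real.sq_sqrt (hw k).le]
  have hg : ∀ k, (√(w k) * v k) ^ (2 : ℝ) = w k * v k ^ 2 := fun k => by
    rw [Real.rpow_two, mul_pow, Real.sq_sqrt (hw k).le]
  have := Real.summable_and_inner_le_Lp_mul_Lq_tsum_of_nonneg Real.HolderConjugate.two_two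
    (f := fun k => u k / √(w k)) (g := fun k => √(w k) * v k)
    (fun k => div_nonneg (hu k) (Real.sqrt_nonneg _))
    (fun k => mul_nonneg (Real.sqrt_nonneg _) (hv k))
    (by simpa only [hf] using hu2) (by simpa only [hg] using hv2)
  simpa only [hprod, hf, hg] using this

lemma summable_and_tsum_shift_mul_le {m v w : ℕ → ℝ} (hm0 : ∀ k, 0 ≤ m k) (hm : Antitone m)
    (hv : ∀ k, 0 ≤ v k) (hw : ∀ k, 0 < w k) (hm2 : Summable fun k => m k ^ 2 / w k)
    (hv2 : Summable fun k => w k * v k ^ 2) (n : ℕ) :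
    (Summable fun k => m (n + k) * v k) ∧
      ∑' k, m (n + k) * v k ≤
        (∑' k, m k ^ 2 / w k) ^ (1 / 2 : ℝ) * (∑' k, w k * v k ^ 2) ^ (1 / 2 : ℝ) := by
  have hshift : ∀ k, m (n + k) ^ 2 / w k ≤ m k ^ 2 / w k := fun k =>
    div_le_div_of_nonneg_right (pow_le_pow_left₀ (hm0 _) (hm (Nat.le_add_left k n)) 2) (hw k).le
  have hshift2 : Summable fun k => m (n + k) ^ 2 / w k :=
    hm2.of_nonneg_of_le (fun k => div_nonneg (sq_nonneg _) (hw k).le) hshift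
  obtain ⟨hs, hle⟩ := summable_and_tsum_mul_le_weighted (fun k => hm0 (n + k)) hv hw hshift2 hv2
  refine ⟨hs, hle.trans (mul_le_mul_of_nonneg_right ?_ (Real.rpow_nonneg
    (tsum_nonneg fun k => mul_nonneg (hw k).le (sq_nonneg _)) _))⟩
  exact Real.rpow_le_rpow (tsum_nonneg fun k => div_nonneg (sq_nonneg _) (hw k).le)
    (hshift2.tsum_le_tsum hshift hm2) (by norm_num)

lemma norm_tsum_ofReal_mul_le {m : ℕ → ℝ} {a : ℕ → ℂ} (hm0 : ∀ k, 0 ≤ m k)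
    (hs : Summable fun k => m k * ‖a k‖) : ‖∑' k, (m k : ℂ) * a k‖ ≤ ∑' k, m k * ‖a k‖ :=
  tsum_of_norm_bounded hs.hasSum fun k => by
    rw [norm_mul, Complex.norm_real, Real.norm_of_nonneg (hm0 k)]

lemma analyticOnNhd_tsum_mul_pow_of_norm_le {c : ℕ → ℂ} {M : ℝ}
    (hc : ∀ n : ℕ, ‖c n‖ ≤ M * ((n : ℝ) + 1)) :
    AnalyticOnNhd ℂ (fun z : ℂ => ∑' n : ℕ, c n * z ^ n) (Metric.ball 0 1) := by
  set p := FormalMultilinearSeries.ofScalars ℂ c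
  have hrad : 1 ≤ p.radius := by
    refine ENNReal.le_of_forall_nnreal_lt fun r hr => p.le_radius_of_summable_norm ?_
    have hr1 : (r : ℝ) < 1 := by exact_mod_cast hr
    have hr0 : 0 ≤ (r : ℝ) := r.coe_nonneg
    have hgeom : Summable fun n : ℕ => ((n : ℝ) + 1) * (r : ℝ) ^ n := by
      have hr' : ‖(r : ℝ)‖ < 1 := by rwa [Real.norm_of_nonneg hr0]
      simpa only [pow_one, add_mul, one_mul] using
        (summable_pow_mul_geometric_of_norm_lt_one 1 hr').add
          (summable_geometric_of_lt_one hr0 hr1)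
    refine (hgeom.mul_left M).of_nonneg_of_le (fun n => by positivity) fun n => ?_
    rw [FormalMultilinearSeries.ofScalars_norm, ← mul_assoc]
    gcongr
    exact hc n
  have hball : Metric.ball (0 : ℂ) 1 ⊆ Metric.eball 0 p.radius := by
    rw [← Metric.eball_ofReal, ENNReal.ofReal_one]
    exact Metric.eball_subset_eball hrad
  refine ((p.hasFPowerSeriesOnBall (one_pos.trans_le hrad)).analyticOnNhd.mono hball).congr
    Metric.isOpen_ball fun z _ => ?_
  exact (FormalMultilinearSeries.ofScalars_sum_eq c z).trans (by simp only [smul_eq_mul])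

/-- If the moments satisfy `μ_n = O(n^{-(α/2+ε)})` for some `ε > 0`, then the
Derivative-Hilbert operator is well defined on the Dirichlet space `D_α`. -/
theorem stmt_0 (α : ℝ) (μ : Measure ℝ) [IsFiniteMeasure μ]
    (hmom : ∃ ε > (0 : ℝ), ∃ C > (0 : ℝ), ∀ n : ℕ, 1 ≤ n →
      moment μ n ≤ C * (n : ℝ) ^ (-(α / 2 + ε))) :
    ∃ C' > (0 : ℝ), ∀ a : ℕ → ℂ,
      Summable (fun k : ℕ => ((k : ℝ) + 1) ^ (1 - α) * ‖a k‖ ^ 2) →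
      (∀ n : ℕ, ∑' k : ℕ, moment μ (n + k) * ‖a k‖ ≤
        C' * (∑' k : ℕ, ((k : ℝ) + 1) ^ (1 - α) * ‖a k‖ ^ 2) ^ ((1 : ℝ) / 2)) ∧
      (∀ n : ℕ, Summable (fun k : ℕ => moment μ (n + k) * ‖a k‖)) ∧
      AnalyticOnNhd ℂ
        (fun z : ℂ => ∑' n : ℕ, (∑' k : ℕ, (moment μ (n + k) : ℂ) * a k) * ((n : ℂ) + 1) * z ^ n)
        (Metric.ball 0 1) := by
  obtain ⟨ε, hε, C, -, hC⟩ := hmom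
  have hB := summable_sq_div_rpow_of_le_rpow hε (moment_nonneg μ) hC
  set B := ∑' k : ℕ, moment μ k ^ 2 / ((k : ℝ) + 1) ^ (1 - α)
  refine ⟨B ^ (1 / 2 : ℝ) + 1, by positivity, fun a ha => ?_⟩
  set T := ∑' k : ℕ, ((k : ℝ) + 1) ^ (1 - α) * ‖a k‖ ^ 2
  have hshift n := summable_and_tsum_shift_mul_le (moment_nonneg μ) (moment_antitone μ)
    (fun k => norm_nonneg (a k)) (fun k => by positivity) hB ha n
  have hbound : ∀ n : ℕ, ∑' k, moment μ (n + k) * ‖a k‖ ≤ (B ^ (1 / 2 : ℝ) + 1) * T ^ (1 / 2 : ℝ) :=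
    fun n => (hshift n).2.trans (by gcongr; linarith)
  refine ⟨hbound, fun n => (hshift n).1, ?_⟩
  refine analyticOnNhd_tsum_mul_pow_of_norm_le (M := (B ^ (1 / 2 : ℝ) + 1) * T ^ (1 / 2 : ℝ))
    (c := fun n => (∑' k : ℕ, (moment μ (n + k) : ℂ) * a k) * ((n : ℂ) + 1)) fun n => ?_
  rw [norm_mul, show (n : ℂ) + 1 = ((n + 1 : ℕ) : ℂ) by push_cast; rfl, Complex.norm_natCast]
  push_cast
  gcongr
  exact (norm_tsum_ofReal_mul_le (fun k => moment_nonneg μ _) (hshift n).1).trans (hbound n)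
end

section
/- Let K : (0,∞) × (0,∞) → [0,∞) be a function such that: (i) K is homogeneous of degree −1, i.e., K(λx, λy) = λ^{-1} K(x,y) for all λ, x, y > 0; (ii) ∫_0^∞ K(x,1) x^{-1/2} dx = ∫_0^∞ K(1,y) y^{-1/2} dy = C < ∞; (iii) the function x ↦ K(x,1) x^{-1/2} is strictly decreasing on (0,∞), and likewise y ↦ K(1,y) y^{-1/2} is strictly decreasing on (0,∞). Then for every nonnegative real sequence (a_n)_{n≥1} with Σ_{n=1}^∞ a_n² < ∞, one has Σ_{n=1}^∞ (Σ_{k=1}^∞ K(n,k) a_k)² ≤ C² Σ_{n=1}^∞ a_n². -/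
/-!
Schur test with the weight `w n k = ((k + 1) / (n + 1)) ^ (-1/2)`. Cauchy–Schwarz gives
`(∑ₖ K n k aₖ)² ≤ (∑ₖ K n k w n k) (∑ₖ K n k aₖ² / w n k)`. By homogeneity the row sum
`∑ₖ K n k w n k` is a right-endpoint Riemann sum, with step `1 / (n + 1)`, of the decreasing
function `y ↦ K 1 y * y ^ (-1/2)`, hence at most `C`; symmetrically every column sum
`∑ₙ K n k / w n k` is at most `C`. Summing over `n` and exchanging the order of summation gives
`C² ∑ₖ aₖ²`. Working in `ℝ≥0∞` removes all summability side conditions.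
-/

open MeasureTheory Set
open scoped ENNReal

variable {ι κ : Type*}

namespace ENNReal

theorem rpow_one_half_sq (x : ℝ≥0∞) : (x ^ (1 / 2 : ℝ)) ^ 2 = x := by
  rw [← rpow_natCast, ← rpow_mul]; norm_num

theorem sq_sum_mul_le_sum_sq_mul_sum_sq (s : Finset ι) (f g : ι → ℝ≥0∞) :
    (∑ i ∈ s, f i * g i) ^ 2 ≤ (∑ i ∈ s, f i ^ 2) * ∑ i ∈ s, g i ^ 2 := by
  have hHolder := inner_le_Lp_mul_Lq s f g Real.HolderConjugate.two_two
  simp only [rpow_two] at hHolder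
  calc (∑ i ∈ s, f i * g i) ^ 2
      ≤ ((∑ i ∈ s, f i ^ 2) ^ (1 / 2 : ℝ) * (∑ i ∈ s, g i ^ 2) ^ (1 / 2 : ℝ)) ^ 2 := by
        gcongr
    _ = (∑ i ∈ s, f i ^ 2) * ∑ i ∈ s, g i ^ 2 := by
        rw [mul_pow, rpow_one_half_sq, rpow_one_half_sq]

theorem sq_tsum_mul_le_tsum_sq_mul_tsum_sq (f g : ι → ℝ≥0∞) :
    (∑' i, f i * g i) ^ 2 ≤ (∑' i, f i ^ 2) * ∑' i, g i ^ 2 := by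
  rw [ENNReal.tsum_eq_iSup_sum, iSup_pow_of_ne_zero two_ne_zero]
  refine iSup_le fun s => (sq_sum_mul_le_sum_sq_mul_sum_sq s f g).trans ?_
  gcongr <;> exact ENNReal.sum_le_tsum s

theorem sq_tsum_le_tsum_mul_tsum_of_sq_le_mul {r f g : ι → ℝ≥0∞}
    (h : ∀ i, r i ^ 2 ≤ f i * g i) : (∑' i, r i) ^ 2 ≤ (∑' i, f i) * ∑' i, g i := by
  have hr : ∀ i, r i ≤ f i ^ (1 / 2 : ℝ) * g i ^ (1 / 2 : ℝ) := fun i => by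
    rw [← ENNReal.pow_le_pow_left_iff two_ne_zero, mul_pow,
      rpow_one_half_sq, rpow_one_half_sq]
    exact h i
  calc (∑' i, r i) ^ 2
      ≤ (∑' i, f i ^ (1 / 2 : ℝ) * g i ^ (1 / 2 : ℝ)) ^ 2 := by
        gcongr with i; exact hr i
    _ ≤ (∑' i, f i) * ∑' i, g i := by
        simpa only [rpow_one_half_sq] using sq_tsum_mul_le_tsum_sq_mul_tsum_sq
          (fun i => f i ^ (1 / 2 : ℝ)) (fun i => g i ^ (1 / 2 : ℝ))

theorem tsum_sq_tsum_mul_le_of_schur_test {B w : ι → κ → ℝ≥0∞} (hw₀ : ∀ i k, w i k ≠ 0)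
    (hw_top : ∀ i k, w i k ≠ ∞) {C : ℝ≥0∞} (hrow : ∀ i, ∑' k, B i k * w i k ≤ C)
    (hcol : ∀ k, ∑' i, B i k * (w i k)⁻¹ ≤ C) (a : κ → ℝ≥0∞) :
    ∑' i, (∑' k, B i k * a k) ^ 2 ≤ C ^ 2 * ∑' k, a k ^ 2 := by
  have hsplit : ∀ i k, (B i k * a k) ^ 2 = B i k * w i k * (B i k * (w i k)⁻¹ * a k ^ 2) :=
    fun i k => by
      rw [show B i k * w i k * (B i k * (w i k)⁻¹ * a k ^ 2)
          = (B i k * a k) ^ 2 * (w i k * (w i k)⁻¹) by ring,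
        ENNReal.mul_inv_cancel (hw₀ i k) (hw_top i k), mul_one]
  have hrow_cs : ∀ i, (∑' k, B i k * a k) ^ 2 ≤ C * ∑' k, B i k * (w i k)⁻¹ * a k ^ 2 :=
    fun i => (sq_tsum_le_tsum_mul_tsum_of_sq_le_mul fun k => (hsplit i k).le).trans
      (mul_le_mul_left (hrow i) _)
  calc ∑' i, (∑' k, B i k * a k) ^ 2
      ≤ ∑' i, C * ∑' k, B i k * (w i k)⁻¹ * a k ^ 2 := ENNReal.tsum_le_tsum hrow_cs
    _ = C * ∑' k, (∑' i, B i k * (w i k)⁻¹) * a k ^ 2 := by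
        rw [ENNReal.tsum_mul_left, ENNReal.tsum_comm]
        simp_rw [ENNReal.tsum_mul_right]
    _ ≤ C * ∑' k, C * a k ^ 2 := by gcongr with k; exact hcol k
    _ = C ^ 2 * ∑' k, a k ^ 2 := by rw [ENNReal.tsum_mul_left, sq, mul_assoc]

theorem ofReal_tsum_le_tsum_ofReal {f : ι → ℝ} (hf : ∀ i, 0 ≤ f i) :
    ENNReal.ofReal (∑' i, f i) ≤ ∑' i, ENNReal.ofReal (f i) := by
  by_cases hs : Summable f
  · exact (ofReal_tsum_of_nonneg hf hs).le
  · simp [tsum_eq_zero_of_not_summable hs]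

end ENNReal

theorem Real.tsum_sq_tsum_mul_le_of_schur_test {B w : ι → κ → ℝ}
    (hB : ∀ i k, 0 ≤ B i k) (hw : ∀ i k, 0 < w i k) {C : ℝ} (hC : 0 ≤ C)
    (hrow : ∀ i, ∑' k, ENNReal.ofReal (B i k * w i k) ≤ ENNReal.ofReal C)
    (hcol : ∀ k, ∑' i, ENNReal.ofReal (B i k * (w i k)⁻¹) ≤ ENNReal.ofReal C)
    {a : κ → ℝ} (ha : ∀ k, 0 ≤ a k) (ha_sq : Summable fun k => a k ^ 2) :
    ∑' i, (∑' k, B i k * a k) ^ 2 ≤ C ^ 2 * ∑' k, a k ^ 2 := by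
  have hschur := ENNReal.tsum_sq_tsum_mul_le_of_schur_test
    (B := fun i k => ENNReal.ofReal (B i k)) (w := fun i k => ENNReal.ofReal (w i k))
    (fun i k => by simpa using hw i k) (fun _ _ => ENNReal.ofReal_ne_top)
    (fun i => by simpa only [← ENNReal.ofReal_mul (hB i _)] using hrow i)
    (fun k => by
      simpa only [← ENNReal.ofReal_inv_of_pos (hw _ k), ← ENNReal.ofReal_mul (hB _ k)]
        using hcol k)
    (fun k => ENNReal.ofReal (a k))
  rw [← ENNReal.ofReal_le_ofReal_iff
    (mul_nonneg (sq_nonneg C) (tsum_nonneg fun k => sq_nonneg _))]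
  calc ENNReal.ofReal (∑' i, (∑' k, B i k * a k) ^ 2)
      ≤ ∑' i, ENNReal.ofReal ((∑' k, B i k * a k) ^ 2) :=
        ENNReal.ofReal_tsum_le_tsum_ofReal fun i => sq_nonneg _
    _ ≤ ∑' i, (∑' k, ENNReal.ofReal (B i k) * ENNReal.ofReal (a k)) ^ 2 := by
        refine ENNReal.tsum_le_tsum fun i => ?_
        rw [ENNReal.ofReal_pow (tsum_nonneg fun k => mul_nonneg (hB i k) (ha k))]
        gcongr
        simpa only [ENNReal.ofReal_mul (hB i _)] using
          ENNReal.ofReal_tsum_le_tsum_ofReal fun k => mul_nonneg (hB i k) (ha k)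
    _ ≤ ENNReal.ofReal C ^ 2 * ∑' k, ENNReal.ofReal (a k) ^ 2 := hschur
    _ = ENNReal.ofReal (C ^ 2 * ∑' k, a k ^ 2) := by
        rw [ENNReal.ofReal_mul (sq_nonneg C), ENNReal.ofReal_pow hC,
          ENNReal.ofReal_tsum_of_nonneg (fun k => sq_nonneg _) ha_sq]
        simp only [ENNReal.ofReal_pow (ha _)]

theorem AntitoneOn.tsum_ofReal_mul_le_lintegral_Ioi {f : ℝ → ℝ≥0∞} (hf : AntitoneOn f (Ioi 0))
    {t : ℝ} (ht : 0 < t) :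
    ∑' k : ℕ, ENNReal.ofReal t * f ((k + 1) * t) ≤ ∫⁻ x in Ioi 0, f x := by
  set I : ℕ → Set ℝ := fun k => Ioc (k * t) ((k + 1) * t)
  have hI : ∀ k, I k ⊆ Ioi 0 := fun k x hx => (by positivity : (0 : ℝ) ≤ k * t).trans_lt hx.1
  have hdisj : Pairwise (Function.onFun Disjoint I) := by
    have hmono : Monotone fun k : ℕ => (k : ℝ) * t := fun m n h =>
      mul_le_mul_of_nonneg_right (Nat.cast_le.2 h) ht.le
    simpa [I, Order.succ_eq_add_one] using hmono.pairwise_disjoint_on_Ioc_succ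
  calc ∑' k : ℕ, ENNReal.ofReal t * f ((k + 1) * t)
      = ∑' k, ∫⁻ _ in I k, f ((k + 1) * t) := tsum_congr fun k => by
        rw [setLIntegral_const, Real.volume_Ioc, mul_comm]
        ring_nf
    _ ≤ ∑' k, ∫⁻ x in I k, f x := ENNReal.tsum_le_tsum fun k =>
        setLIntegral_mono' measurableSet_Ioc fun x hx =>
          hf (hI k hx) (hI k ⟨hx.1.trans_le hx.2, le_rfl⟩) hx.2
    _ = ∫⁻ x in ⋃ k, I k, f x := (lintegral_iUnion (fun _ => measurableSet_Ioc) hdisj f).symm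
    _ ≤ ∫⁻ x in Ioi 0, f x := lintegral_mono_set (iUnion_subset hI)

theorem tsum_ofReal_kernel_mul_rpow_le {K : ℝ → ℝ → ℝ} {s : ℝ}
    (hnonneg : ∀ x y : ℝ, 0 < x → 0 < y → 0 ≤ K x y)
    (hhom : ∀ lam x y : ℝ, 0 < lam → 0 < x → 0 < y → K (lam * x) (lam * y) = lam⁻¹ * K x y)
    (hint : IntegrableOn (fun y : ℝ => K 1 y * y ^ s) (Ioi 0))
    (hanti : AntitoneOn (fun y : ℝ => K 1 y * y ^ s) (Ioi 0)) {m : ℝ} (hm : 0 < m) :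
    ∑' k : ℕ, ENNReal.ofReal (K m (k + 1) * ((k + 1) / m) ^ s) ≤
      ENNReal.ofReal (∫ y in Ioi 0, K 1 y * y ^ s) := by
  have hterm : ∀ k : ℕ, ENNReal.ofReal (K m (k + 1) * ((k + 1) / m) ^ s) =
      ENNReal.ofReal m⁻¹ * ENNReal.ofReal (K 1 ((k + 1) * m⁻¹) * ((k + 1) * m⁻¹) ^ s) := by
    intro k
    have hscale := hhom m 1 ((k + 1) / m) hm one_pos (by positivity)
    rw [mul_one, mul_div_cancel₀ _ hm.ne'] at hscale
    rw [← ENNReal.ofReal_mul (inv_nonneg.2 hm.le), ← div_eq_mul_inv, hscale, mul_assoc]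
  have hintegrand_nonneg : ∀ y ∈ Ioi (0 : ℝ), 0 ≤ K 1 y * y ^ s := fun y hy =>
    mul_nonneg (hnonneg 1 y one_pos hy) (Real.rpow_nonneg (le_of_lt hy) s)
  calc ∑' k : ℕ, ENNReal.ofReal (K m (k + 1) * ((k + 1) / m) ^ s)
      = ∑' k : ℕ, ENNReal.ofReal m⁻¹ *
          ENNReal.ofReal (K 1 ((k + 1) * m⁻¹) * ((k + 1) * m⁻¹) ^ s) := tsum_congr hterm
    _ ≤ ∫⁻ y in Ioi 0, ENNReal.ofReal (K 1 y * y ^ s) :=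
        (ENNReal.ofReal_mono.comp_antitoneOn hanti).tsum_ofReal_mul_le_lintegral_Ioi
          (inv_pos.2 hm)
    _ = ENNReal.ofReal (∫ y in Ioi 0, K 1 y * y ^ s) :=
        (ofReal_integral_eq_lintegral_ofReal hint
          ((ae_restrict_iff' measurableSet_Ioi).2 (ae_of_all _ hintegrand_nonneg))).symm

/-- Hardy–Littlewood–Pólya, Theorem 318: a Hilbert-type inequality for kernels
that are homogeneous of degree `-1`. -/
theorem stmt_1 (K : ℝ → ℝ → ℝ) (C : ℝ)
    (hnonneg : ∀ x y : ℝ, 0 < x → 0 < y → 0 ≤ K x y)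
    (hhom : ∀ lam x y : ℝ, 0 < lam → 0 < x → 0 < y →
      K (lam * x) (lam * y) = lam⁻¹ * K x y)
    (hint₁ : IntegrableOn (fun x : ℝ => K x 1 * x ^ (-(1 : ℝ) / 2)) (Set.Ioi 0))
    (hval₁ : ∫ x in Set.Ioi (0 : ℝ), K x 1 * x ^ (-(1 : ℝ) / 2) = C)
    (hint₂ : IntegrableOn (fun y : ℝ => K 1 y * y ^ (-(1 : ℝ) / 2)) (Set.Ioi 0))
    (hval₂ : ∫ y in Set.Ioi (0 : ℝ), K 1 y * y ^ (-(1 : ℝ) / 2) = C)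
    (hanti₁ : StrictAntiOn (fun x : ℝ => K x 1 * x ^ (-(1 : ℝ) / 2)) (Set.Ioi 0))
    (hanti₂ : StrictAntiOn (fun y : ℝ => K 1 y * y ^ (-(1 : ℝ) / 2)) (Set.Ioi 0)) :
    ∀ a : ℕ → ℝ, (∀ n : ℕ, 0 ≤ a n) → Summable (fun n : ℕ => a n ^ 2) →
      ∑' n : ℕ, (∑' k : ℕ, K ((n : ℝ) + 1) ((k : ℝ) + 1) * a k) ^ 2 ≤
        C ^ 2 * ∑' n : ℕ, a n ^ 2 := by
  intro a ha ha_sq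
  have hC : 0 ≤ C := hval₂ ▸ setIntegral_nonneg measurableSet_Ioi fun y hy =>
    mul_nonneg (hnonneg 1 y one_pos hy) (Real.rpow_nonneg (le_of_lt hy) _)
  refine Real.tsum_sq_tsum_mul_le_of_schur_test
    (w := fun (n k : ℕ) => (((k : ℝ) + 1) / ((n : ℝ) + 1)) ^ (-(1 : ℝ) / 2))
    (fun n k => hnonneg _ _ (by positivity) (by positivity)) (fun n k => by positivity) hC
    (fun n => ?_) (fun k => ?_) ha ha_sq
  · exact hval₂ ▸ tsum_ofReal_kernel_mul_rpow_le hnonneg hhom hint₂ hanti₂.antitoneOn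
      (by positivity)
  · have hinv : ∀ n : ℕ, ((((k : ℝ) + 1) / ((n : ℝ) + 1)) ^ (-(1 : ℝ) / 2))⁻¹ =
        (((n : ℝ) + 1) / ((k : ℝ) + 1)) ^ (-(1 : ℝ) / 2) := fun n => by
      rw [← Real.inv_rpow (by positivity), inv_div]
    simp only [hinv]
    -- the column sums of `K` are the row sums of the transposed kernel
    exact hval₁ ▸ tsum_ofReal_kernel_mul_rpow_le (K := fun x y => K y x)
      (fun x y hx hy => hnonneg y x hy hx) (fun lam x y hl hx hy => hhom lam y x hl hy hx)
      hint₁ hanti₁.antitoneOn (by positivity)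
end

section
/- Let 0 < α ≤ 2 and 2 ≤ β < 4, and set C = B(2 − β/2, α/2), where B denotes the Beta function. Then for every nonnegative real sequence (b_k)_{k≥1} with Σ_{k=1}^∞ b_k² < ∞, one has Σ_{n=1}^∞ ( Σ_{k=1}^∞ n^{(3−β)/2} k^{(α−1)/2} (n+k)^{-(2−(β−α)/2)} b_k )² ≤ C² Σ_{k=1}^∞ b_k². -/
/-!
A Schur test with the weight `m ↦ (m + 1) ^ (-1/2)` on both sides. Writing `s = 2 - β/2` and
`t = α/2`, the kernel is `K(x, y) = x ^ (s - 1/2) y ^ (t - 1/2) (x + y) ^ (-(s + t))`, and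
`∑ₙ K(n, c) n ^ (-1/2) = c ^ (t - 1/2) ∑ₙ n ^ (s - 1) (n + c) ^ (-(s + t))`. For `s ≤ 1` the summand
is antitone, so the sum is at most the integral over `(0, ∞)`, which the substitution
`x = c u / (1 - u)` turns into `c ^ (-t) B(s, t)`. Hence both Schur sums are bounded by
`B(s, t) c ^ (-1/2)`, and the weighted Cauchy–Schwarz inequality gives the operator bound
`B(s, t)` on `ℓ²`.
-/

open MeasureTheory Set Real ProbabilityTheory

lemma integral_rpow_mul_one_sub_rpow {s t : ℝ} (hs : 0 < s) (ht : 0 < t) :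
    IntegrableOn (fun x : ℝ => x ^ (s - 1) * (1 - x) ^ (t - 1)) (Ioo 0 1) ∧
      ∫ x in Ioo 0 1, x ^ (s - 1) * (1 - x) ^ (t - 1) = beta s t := by
  have hcpow : ∀ x ∈ Ioc (0 : ℝ) 1, (x : ℂ) ^ ((s : ℂ) - 1) * (1 - (x : ℂ)) ^ ((t : ℂ) - 1) =
      ((x ^ (s - 1) * (1 - x) ^ (t - 1) : ℝ) : ℂ) := fun x hx => by
    push_cast
    rw [Complex.ofReal_cpow hx.1.le, Complex.ofReal_cpow (sub_nonneg.2 hx.2)]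
    push_cast; rfl
  have hconv := (Complex.betaIntegral_convergent (u := s) (v := t) (by simpa) (by simpa))
  rw [intervalIntegrable_iff_integrableOn_Ioc_of_le zero_le_one] at hconv
  have hint : IntegrableOn (fun x : ℝ => x ^ (s - 1) * (1 - x) ^ (t - 1)) (Ioc 0 1) :=
    IntegrableOn.congr_fun (Integrable.re hconv) (fun x hx => by simp [hcpow x hx])
      measurableSet_Ioc
  refine ⟨hint.mono_set Ioo_subset_Ioc_self, ?_⟩
  rw [beta_eq_betaIntegralReal s t hs ht, Complex.betaIntegral,
    intervalIntegral.integral_of_le zero_le_one, ← integral_Ioc_eq_integral_Ioo,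
    ← RCLike.re_to_complex, ← integral_re hconv]
  exact setIntegral_congr_fun measurableSet_Ioc fun x hx => by simp [hcpow x hx]

lemma image_mul_div_one_sub_Ioo {c : ℝ} (hc : 0 < c) :
    (fun u => c * u / (1 - u)) '' Ioo 0 1 = Ioi 0 := by
  ext x
  refine ⟨fun ⟨u, hu, hux⟩ => hux ▸ div_pos (mul_pos hc hu.1) (by linarith [hu.2]),
    fun (hx : 0 < x) => ?_⟩
  refine ⟨x / (x + c), ⟨by positivity, (div_lt_one (by positivity)).2 (by linarith)⟩, ?_⟩
  field_simp [hc.ne']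
  ring

lemma integral_Ioi_rpow_mul_add_rpow {s t c : ℝ} (hs : 0 < s) (ht : 0 < t) (hc : 0 < c) :
    IntegrableOn (fun x : ℝ => x ^ (s - 1) * (x + c) ^ (-(s + t))) (Ioi 0) ∧
      ∫ x in Ioi 0, x ^ (s - 1) * (x + c) ^ (-(s + t)) = c ^ (-t) * beta s t := by
  set φ : ℝ → ℝ := fun u => c * u / (1 - u)
  have hφ' : ∀ u ∈ Ioo (0 : ℝ) 1, HasDerivWithinAt φ (c / (1 - u) ^ 2) (Ioo 0 1) u := by
    intro u hu
    have hu1 : 1 - u ≠ 0 := by linarith [hu.2]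
    have h := ((hasDerivAt_id u).const_mul c).div
      ((hasDerivAt_const u (1 : ℝ)).sub (hasDerivAt_id u)) hu1
    refine (h.congr_deriv ?_).hasDerivWithinAt
    simp only [Pi.sub_apply, id]
    field_simp
    ring
  have hinj : InjOn φ (Ioo 0 1) := by
    intro u hu v hv huv
    have hu1 : 1 - u ≠ 0 := by linarith [hu.2]
    have hv1 : 1 - v ≠ 0 := by linarith [hv.2]
    simp only [φ] at huv
    field_simp at huv
    nlinarith [hc]
  have hjac : ∀ u ∈ Ioo (0 : ℝ) 1, |c / (1 - u) ^ 2| • (φ u ^ (s - 1) * (φ u + c) ^ (-(s + t))) =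
      c ^ (-t) * (u ^ (s - 1) * (1 - u) ^ (t - 1)) := by
    intro u ⟨hu0, hu1⟩
    have hw : 0 < 1 - u := by linarith
    have hφc : φ u + c = c / (1 - u) := by simp only [φ]; field_simp; ring
    rw [hφc, abs_of_pos (by positivity), smul_eq_mul, div_rpow (by positivity) hw.le,
      mul_rpow hc.le hu0.le, div_rpow hc.le hw.le, rpow_neg hc.le, rpow_neg hw.le,
      rpow_neg hc.le, rpow_add hc, rpow_add hw, rpow_sub_one hc.ne', rpow_sub_one hw.ne',
      rpow_sub_one hw.ne']
    field_simp
  obtain ⟨hint, hbeta⟩ := integral_rpow_mul_one_sub_rpow hs ht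
  rw [← image_mul_div_one_sub_Ioo hc,
    integrableOn_image_iff_integrableOn_abs_deriv_smul measurableSet_Ioo hφ' hinj,
    integral_image_eq_integral_abs_deriv_smul measurableSet_Ioo hφ' hinj,
    setIntegral_congr_fun measurableSet_Ioo hjac, integral_const_mul, hbeta]
  exact ⟨IntegrableOn.congr_fun (hint.const_mul _) (fun u hu => (hjac u hu).symm)
    measurableSet_Ioo, rfl⟩

lemma AntitoneOn.tsum_add_one_le_integral_Ioi {f : ℝ → ℝ} (anti : AntitoneOn f (Ioi 0))
    (integrable : IntegrableOn f (Ioi 0)) (nonneg : ∀ x ∈ Ioi (0 : ℝ), 0 ≤ f x) :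
    Summable (fun n : ℕ => f (n + 1)) ∧ ∑' n : ℕ, f (n + 1) ≤ ∫ x in Ioi 0, f x := by
  have hint : ∀ n : ℕ, IntervalIntegrable f volume n (n + 1) := fun n =>
    (intervalIntegrable_iff_integrableOn_Ioc_of_le (by linarith)).2 <|
      integrable.mono_set fun x hx => lt_of_le_of_lt n.cast_nonneg hx.1
  have hpartial : ∀ N : ℕ, ∑ n ∈ Finset.range N, f (n + 1) ≤ ∫ x in Ioi 0, f x := by
    intro N
    calc ∑ n ∈ Finset.range N, f (n + 1)
        ≤ ∑ n ∈ Finset.range N, ∫ x in (n : ℝ)..n + 1, f x := by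
          gcongr with n
          calc f (n + 1) = ∫ _ in (n : ℝ)..n + 1, f (n + 1) := by simp
            _ ≤ ∫ x in (n : ℝ)..n + 1, f x :=
              intervalIntegral.integral_mono_on_of_le_Ioo (by linarith) intervalIntegrable_const
                (hint n) fun x hx => anti (lt_of_le_of_lt n.cast_nonneg hx.1)
                  (mem_Ioi.2 (by positivity)) hx.2.le
      _ = ∫ x in (0 : ℝ)..N, f x := by
          simpa using intervalIntegral.sum_integral_adjacent_intervals
            (a := fun n : ℕ => (n : ℝ)) fun n _ => by simpa using hint n
      _ ≤ ∫ x in Ioi 0, f x := by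
          rw [intervalIntegral.integral_of_le N.cast_nonneg]
          exact setIntegral_mono_set integrable
            (ae_restrict_of_forall_mem measurableSet_Ioi nonneg) Ioc_subset_Ioi_self.eventuallyLE
  have hf0 : ∀ n : ℕ, 0 ≤ f (n + 1) := fun n => nonneg _ (mem_Ioi.2 (by positivity))
  exact ⟨summable_of_sum_range_le hf0 hpartial, Real.tsum_le_of_sum_range_le hf0 hpartial⟩

lemma tsum_sq_le_tsum_mul_tsum_of_sq_le_mul {ι : Type*} {r f g : ι → ℝ} (hf : ∀ i, 0 ≤ f i)
    (hg : ∀ i, 0 ≤ g i) (hfs : Summable f) (hgs : Summable g) (h : ∀ i, r i ^ 2 ≤ f i * g i) :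
    Summable r ∧ (∑' i, r i) ^ 2 ≤ (∑' i, f i) * ∑' i, g i := by
  have hr : Summable r := by
    refine ((hfs.add hgs).div_const 2).of_norm_bounded fun i => ?_
    have := two_mul_le_add_of_sq_le_mul (hf i) (hg i) (by rw [sq_abs]; exact h i)
    rw [Real.norm_eq_abs]
    linarith
  refine ⟨hr, le_of_tendsto' (hr.hasSum.pow 2) fun s => ?_⟩
  calc (∑ i ∈ s, r i) ^ 2 ≤ (∑ i ∈ s, f i) * ∑ i ∈ s, g i :=
        Finset.sum_sq_le_sum_mul_sum_of_sq_le_mul s (fun i _ => hf i) (fun i _ => hg i)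
          fun i _ => h i
    _ ≤ (∑' i, f i) * ∑' i, g i :=
        mul_le_mul (hfs.sum_le_tsum s fun i _ => hf i) (hgs.sum_le_tsum s fun i _ => hg i)
          (Finset.sum_nonneg fun i _ => hg i) (tsum_nonneg hf)

theorem schur_test {ι κ : Type*} {K : ι → κ → ℝ} {p : ι → ℝ} {q b : κ → ℝ} {A B : ℝ}
    (hK : ∀ i k, 0 ≤ K i k) (hp : ∀ i, 0 < p i) (hq : ∀ k, 0 < q k) (hA : 0 ≤ A)
    (hKq : ∀ i, Summable fun k => K i k * q k) (hKq_le : ∀ i, ∑' k, K i k * q k ≤ A * p i)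
    (hKp : ∀ k, Summable fun i => K i k * p i) (hKp_le : ∀ k, ∑' i, K i k * p i ≤ B * q k)
    (hb : Summable fun k => b k ^ 2) :
    ∑' i, (∑' k, K i k * b k) ^ 2 ≤ A * B * ∑' k, b k ^ 2 := by
  set G : κ × ι → ℝ := fun x => K x.2 x.1 * p x.2 * (b x.1 ^ 2 / q x.1)
  have hG0 : 0 ≤ G := fun x =>
    mul_nonneg (mul_nonneg (hK _ _) (hp _).le) (div_nonneg (sq_nonneg _) (hq _).le)
  have hG_col : ∀ k, ∑' i, G (k, i) ≤ B * b k ^ 2 := fun k => by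
    have := hq k
    calc ∑' i, G (k, i) = (∑' i, K i k * p i) * (b k ^ 2 / q k) := by
          simp only [G]; exact tsum_mul_right
      _ ≤ B * q k * (b k ^ 2 / q k) := by gcongr; exact hKp_le k
      _ = B * b k ^ 2 := by field_simp
  have hG : Summable G := by
    refine (summable_prod_of_nonneg hG0).2 ⟨fun k => ?_, ?_⟩
    · exact (hKp k).mul_right (b k ^ 2 / q k)
    · exact .of_nonneg_of_le (fun k => tsum_nonneg fun i => hG0 _) hG_col (hb.mul_left B)
  have hG_row : Summable fun i => ∑' k, G (k, i) := hG.prod_symm.prod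
  -- weighted Cauchy–Schwarz, splitting `K b = (K q)^(1/2) (K b² / q)^(1/2)`
  have hrow : ∀ i, (∑' k, K i k * b k) ^ 2 ≤ A * ∑' k, G (k, i) := fun i => by
    have hg : Summable fun k => K i k * (b k ^ 2 / q k) := by
      have := (hG.prod_symm.prod_factor i).div_const (p i)
      refine this.congr fun k => ?_
      simp only [G, Prod.swap]
      field_simp [(hp i).ne']
    calc (∑' k, K i k * b k) ^ 2 ≤ (∑' k, K i k * q k) * ∑' k, K i k * (b k ^ 2 / q k) :=
          (tsum_sq_le_tsum_mul_tsum_of_sq_le_mul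
            (fun k => mul_nonneg (hK i k) (hq k).le)
            (fun k => mul_nonneg (hK i k) (div_nonneg (sq_nonneg _) (hq k).le)) (hKq i) hg
            fun k => (by field_simp [(hq k).ne'] : _ = _).le).2
      _ ≤ A * p i * ∑' k, K i k * (b k ^ 2 / q k) := by
          gcongr
          · exact tsum_nonneg fun k => mul_nonneg (hK i k) (div_nonneg (sq_nonneg _) (hq k).le)
          · exact hKq_le i
      _ = A * ∑' k, G (k, i) := by simp only [G, mul_assoc, ← tsum_mul_left, mul_left_comm (p i)]
  calc ∑' i, (∑' k, K i k * b k) ^ 2 ≤ ∑' i, A * ∑' k, G (k, i) :=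
        Summable.tsum_le_tsum hrow
          (.of_nonneg_of_le (fun i => sq_nonneg _) hrow (hG_row.mul_left A)) (hG_row.mul_left A)
    _ = A * ∑' k, ∑' i, G (k, i) := by
        rw [tsum_mul_left,
          hG.tsum_comm' (fun k => hG.prod_factor k) (fun i => hG.prod_symm.prod_factor i)]
    _ ≤ A * ∑' k, B * b k ^ 2 :=
        mul_le_mul_of_nonneg_left (hG.prod.tsum_le_tsum hG_col (hb.mul_left B)) hA
    _ = A * B * ∑' k, b k ^ 2 := by rw [tsum_mul_left, mul_assoc]

lemma tsum_rpow_mul_add_rpow_le {s t c : ℝ} (hs : 0 < s) (hs1 : s ≤ 1) (ht : 0 < t)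
    (hc : 0 < c) :
    Summable (fun n : ℕ => ((n : ℝ) + 1) ^ (s - 1) * ((n + 1) + c) ^ (-(s + t))) ∧
      ∑' n : ℕ, ((n : ℝ) + 1) ^ (s - 1) * ((n + 1) + c) ^ (-(s + t)) ≤ c ^ (-t) * beta s t := by
  obtain ⟨hint, hval⟩ := integral_Ioi_rpow_mul_add_rpow hs ht hc
  have anti : AntitoneOn (fun x : ℝ => x ^ (s - 1) * (x + c) ^ (-(s + t))) (Ioi 0) :=
    fun x (hx : 0 < x) y (hy : 0 < y) hxy =>
      mul_le_mul (rpow_le_rpow_of_nonpos hx hxy (by linarith))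
        (rpow_le_rpow_of_nonpos (by positivity) (by linarith) (by linarith)) (by positivity)
        (by positivity)
  have nonneg : ∀ x ∈ Ioi (0 : ℝ), 0 ≤ x ^ (s - 1) * (x + c) ^ (-(s + t)) :=
    fun x (hx : 0 < x) => by positivity
  rw [← hval]
  exact anti.tsum_add_one_le_integral_Ioi hint nonneg

noncomputable def hilbertKernel (s t x y : ℝ) : ℝ :=
  x ^ (s - 1 / 2) * y ^ (t - 1 / 2) * (x + y) ^ (-(s + t))

lemma hilbertKernel_comm (s t x y : ℝ) : hilbertKernel s t x y = hilbertKernel t s y x := by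
  simp only [hilbertKernel, add_comm x y, add_comm s t]
  ring

lemma beta_comm (s t : ℝ) : beta s t = beta t s := by
  simp only [beta, add_comm s t, mul_comm]

lemma hilbertKernel_mul_rpow_neg_half {s t x c : ℝ} (hx : 0 < x) :
    hilbertKernel s t x c * x ^ (-(1 / 2) : ℝ) =
      c ^ (t - 1 / 2) * (x ^ (s - 1) * (x + c) ^ (-(s + t))) := by
  rw [hilbertKernel, show s - 1 = (s - 1 / 2) + (-(1 / 2)) by ring, rpow_add hx]
  ring

lemma tsum_hilbertKernel_mul_rpow_neg_half_le {s t c : ℝ} (hs : 0 < s) (hs1 : s ≤ 1)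
    (ht : 0 < t) (hc : 0 < c) :
    Summable (fun n : ℕ => hilbertKernel s t (n + 1) c * ((n : ℝ) + 1) ^ (-(1 / 2) : ℝ)) ∧
      ∑' n : ℕ, hilbertKernel s t (n + 1) c * ((n : ℝ) + 1) ^ (-(1 / 2) : ℝ) ≤
        beta s t * c ^ (-(1 / 2) : ℝ) := by
  obtain ⟨hsum, hle⟩ := tsum_rpow_mul_add_rpow_le hs hs1 ht hc
  simp_rw [hilbertKernel_mul_rpow_neg_half (Nat.cast_add_one_pos _)]
  refine ⟨hsum.mul_left _, ?_⟩
  calc ∑' n : ℕ, c ^ (t - 1 / 2) * (((n : ℝ) + 1) ^ (s - 1) * ((n + 1) + c) ^ (-(s + t)))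
      = c ^ (t - 1 / 2) * ∑' n : ℕ, ((n : ℝ) + 1) ^ (s - 1) * ((n + 1) + c) ^ (-(s + t)) :=
        tsum_mul_left
    _ ≤ c ^ (t - 1 / 2) * (c ^ (-t) * beta s t) := by gcongr
    _ = beta s t * c ^ (-(1 / 2) : ℝ) := by
        rw [mul_left_comm, ← mul_assoc, ← rpow_add hc]
        ring_nf

theorem hilbertKernel_tsum_sq_le {s t : ℝ} (hs : 0 < s) (hs1 : s ≤ 1) (ht : 0 < t) (ht1 : t ≤ 1)
    {b : ℕ → ℝ} (hb : Summable fun k => b k ^ 2) :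
    ∑' n : ℕ, (∑' k : ℕ, hilbertKernel s t (n + 1) (k + 1) * b k) ^ 2 ≤
      beta s t ^ 2 * ∑' k, b k ^ 2 := by
  have hw : ∀ m : ℕ, 0 < ((m : ℝ) + 1) ^ (-(1 / 2) : ℝ) := fun m => by positivity
  rw [sq]
  refine schur_test (p := fun m : ℕ => ((m : ℝ) + 1) ^ (-(1 / 2) : ℝ)) (fun n k => ?_) hw hw
    (beta_pos hs ht).le (fun n => ?_) (fun n => ?_) (fun k => ?_) (fun k => ?_) hb
  · rw [hilbertKernel]; positivity
  · simp_rw [hilbertKernel_comm s t]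
    exact (tsum_hilbertKernel_mul_rpow_neg_half_le ht ht1 hs (Nat.cast_add_one_pos n)).1
  · simp_rw [hilbertKernel_comm s t, beta_comm s t]
    exact (tsum_hilbertKernel_mul_rpow_neg_half_le ht ht1 hs (Nat.cast_add_one_pos n)).2
  · exact (tsum_hilbertKernel_mul_rpow_neg_half_le hs hs1 ht (Nat.cast_add_one_pos k)).1
  · exact (tsum_hilbertKernel_mul_rpow_neg_half_le hs hs1 ht (Nat.cast_add_one_pos k)).2

/-- The Hilbert-type inequality for the particular kernel
`K(x,y) = x^{(3-β)/2} y^{(α-1)/2} (x+y)^{-(2-(β-α)/2)}`, with best constant the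
Beta function value `B(2-β/2, α/2) = Γ(2-β/2)Γ(α/2)/Γ(2-β/2+α/2)`. -/
theorem stmt_2 (α β : ℝ) (hα : 0 < α) (hα' : α ≤ 2) (hβ : 2 ≤ β) (hβ' : β < 4)
    (C : ℝ)
    (hC : C = Real.Gamma (2 - β / 2) * Real.Gamma (α / 2) /
      Real.Gamma ((2 - β / 2) + α / 2)) :
    ∀ b : ℕ → ℝ, (∀ k : ℕ, 0 ≤ b k) → Summable (fun k : ℕ => b k ^ 2) →
      ∑' n : ℕ, (∑' k : ℕ, ((n : ℝ) + 1) ^ ((3 - β) / 2) * ((k : ℝ) + 1) ^ ((α - 1) / 2) *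
          (((n : ℝ) + 1) + ((k : ℝ) + 1)) ^ (-(2 - (β - α) / 2)) * b k) ^ 2 ≤
        C ^ 2 * ∑' k : ℕ, b k ^ 2 := by
  intro b _ hb
  have hC' : C = beta (2 - β / 2) (α / 2) := hC
  have h := hilbertKernel_tsum_sq_le (s := 2 - β / 2) (t := α / 2) (by linarith) (by linarith)
    (by linarith) (by linarith) hb
  rw [hC']
  convert h using 6 with n k
  rw [hilbertKernel]
  ring_nf
end
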